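/- arXiv:1808.07800 — 2 statements merged into one kernel-verified Lean document; each statement's English description precedes it below -/
import Mathlib

section
/- For every integer j ≥ 2, the polynomial λ(j) satisfies the recursion λ(j) = λ(j-1) − z·q^(j-2)·λ(j-2). -/
/-- The Gaussian `q`-binomial coefficient `[n choose k]_q`, defined over any
commutative ring via the Pascal-type recursion
`[m choose k]_q = [m-1 choose k]_q + q^(m-k) * [m-1 choose k-1]_q`.
This agrees with `(q;q)_n / ((q;q)_k (q;q)_{n-k})`. -/
def qbinom {R : Type*} [CommRing R] (q : R) : ℕ → ℕ → R
  | _, 0 => 1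
  | 0, _ + 1 => 0
  | n + 1, k + 1 => qbinom q n (k + 1) + q ^ (n - k) * qbinom q n k

/-- `λ(j) = Σ_{0 ≤ k ≤ j/2} [j-k choose k]_q · (-1)^k · q^(k(k-1)) · z^k`. -/
def lam {R : Type*} [CommRing R] (q z : R) (j : ℕ) : R :=
  ∑ k ∈ Finset.range (j / 2 + 1),
    qbinom q (j - k) k * (-1 : R) ^ k * q ^ (k * (k - 1)) * z ^ k

lemma qbinom_eq_zero {R : Type*} [CommRing R] (q : R) :
    ∀ n k : ℕ, n < k → qbinom q n k = 0
  | 0, _ + 1, _ => rfl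
  | n + 1, k + 1, h => by
    rw [qbinom, qbinom_eq_zero q n (k + 1) (by omega), qbinom_eq_zero q n k (by omega)]
    ring

/-- For every integer `j ≥ 2`, `λ(j) = λ(j-1) - z·q^(j-2)·λ(j-2)`. -/
theorem lam_recursion {R : Type*} [CommRing R] (q z : R) (j : ℕ) (hj : 2 ≤ j) :
    lam q z j = lam q z (j - 1) - z * q ^ (j - 2) * lam q z (j - 2) := by
  obtain ⟨m, rfl⟩ : ∃ m, j = m + 2 := ⟨j - 2, by omega⟩
  have hd1 : m + 2 - 1 = m + 1 := rfl
  have hd2 : m + 2 - 2 = m := rfl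
  rw [hd1, hd2]
  unfold lam
  have hN : (m + 2) / 2 + 1 = (m / 2 + 1) + 1 := by omega
  rw [hN, Finset.sum_range_succ']
  have key : ∀ k ∈ Finset.range (m / 2 + 1),
      qbinom q (m + 2 - (k + 1)) (k + 1) * (-1 : R) ^ (k + 1) *
        q ^ ((k + 1) * (k + 1 - 1)) * z ^ (k + 1)
      = qbinom q (m + 1 - (k + 1)) (k + 1) * (-1 : R) ^ (k + 1) *
          q ^ ((k + 1) * (k + 1 - 1)) * z ^ (k + 1)
        + (-(z * q ^ m *
            (qbinom q (m - k) k * (-1 : R) ^ k * q ^ (k * (k - 1)) * z ^ k))) := by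
    intro k hk
    simp only [Finset.mem_range] at hk
    have h2k : 2 * k ≤ m := by omega
    have e1 : m + 2 - (k + 1) = (m - k) + 1 := by omega
    have e2 : m + 1 - (k + 1) = m - k := by omega
    rw [e1, e2, qbinom]
    have epow : (m - k - k) + (k + 1) * (k + 1 - 1) = m + k * (k - 1) := by
      rcases k with _ | n
      · simp
      · have h1 : (n + 1 + 1) * (n + 1) = n * n + 3 * n + 2 := by ring
        have h2 : (n + 1) * n = n * n + n := by ring
        simp only [Nat.add_sub_cancel] at *
        omega
    have : q ^ (m - k - k) * q ^ ((k + 1) * (k + 1 - 1)) = q ^ m * q ^ (k * (k - 1)) := by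
      rw [← pow_add, ← pow_add, epow]
    calc (qbinom q (m - k) (k + 1) + q ^ (m - k - k) * qbinom q (m - k) k) *
          (-1 : R) ^ (k + 1) * q ^ ((k + 1) * (k + 1 - 1)) * z ^ (k + 1)
        = qbinom q (m - k) (k + 1) * (-1 : R) ^ (k + 1) *
            q ^ ((k + 1) * (k + 1 - 1)) * z ^ (k + 1)
          + (q ^ (m - k - k) * q ^ ((k + 1) * (k + 1 - 1))) *
              (qbinom q (m - k) k * (-1 : R) ^ (k + 1) * z ^ (k + 1)) := by ring
      _ = _ := by rw [this]; ring
  rw [Finset.sum_congr rfl key, Finset.sum_add_distrib]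
  -- now handle the two sums
  have hA : ∑ k ∈ Finset.range (m / 2 + 1),
      qbinom q (m + 1 - (k + 1)) (k + 1) * (-1 : R) ^ (k + 1) *
        q ^ ((k + 1) * (k + 1 - 1)) * z ^ (k + 1)
      = ∑ k ∈ Finset.range ((m + 1) / 2),
          qbinom q (m + 1 - (k + 1)) (k + 1) * (-1 : R) ^ (k + 1) *
            q ^ ((k + 1) * (k + 1 - 1)) * z ^ (k + 1) := by
    symm
    apply Finset.sum_subset
    · intro x hx
      simp only [Finset.mem_range] at *
      omega
    · intro x hx hx'
      simp only [Finset.mem_range] at *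
      rw [qbinom_eq_zero q (m + 1 - (x + 1)) (x + 1) (by omega)]
      ring
  have hB : ∑ k ∈ Finset.range (m / 2 + 1),
      (-(z * q ^ m * (qbinom q (m - k) k * (-1 : R) ^ k * q ^ (k * (k - 1)) * z ^ k)))
      = -(z * q ^ m * ∑ k ∈ Finset.range (m / 2 + 1),
          qbinom q (m - k) k * (-1 : R) ^ k * q ^ (k * (k - 1)) * z ^ k) := by
    simp [Finset.mul_sum]
  rw [hA, hB]
  have hRHS : (m + 1) / 2 + 1 = (m + 1) / 2 + 1 := rfl
  rw [Finset.sum_range_succ' (fun k => qbinom q (m + 1 - k) k * (-1 : R) ^ k *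
        q ^ (k * (k - 1)) * z ^ k) ((m + 1) / 2)]
  simp [qbinom]
  ring
end

section
/- Let M = M(n) be Lehmer's n×n tridiagonal matrix with M_{i,i} = 1, M_{i,i+1} = s·r^(i-1), M_{i+1,i} = s·r^(i-1), and all other entries zero. Let L and U be the n×n matrices defined by L_{j,j} = 1, L_{j+1,j} = s·r^(j-1)·λ(j-1)/λ(j), all other entries of L zero, and U_{j,j} = λ(j)/λ(j-1), U_{j,j+1} = s·r^(j-1), all other entries of U zero. Then L·U = M; that is, L and U give the LU-decomposition of Lehmer's matrix, with L unit lower triangular (in fact unit lower bidiagonal) and U upper triangular (in fact upper bidiagonal). -/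
/-- The unit lower bidiagonal matrix `L` (1-based: `L_{j,j} = 1`,
`L_{j+1,j} = s·r^(j-1)·λ(j-1)/λ(j)`), written with 0-based `Fin n` indices. -/
def Lmat {F : Type*} [Field F] (r s : F) (n : ℕ) : Matrix (Fin n) (Fin n) F :=
  Matrix.of fun a b =>
    if (a : ℕ) = (b : ℕ) then 1
    else if (a : ℕ) = (b : ℕ) + 1 then
      s * r ^ (b : ℕ) * lam (r ^ 2) (s ^ 2) (b : ℕ) / lam (r ^ 2) (s ^ 2) ((b : ℕ) + 1)
    else 0

/-- The upper bidiagonal matrix `U` (1-based: `U_{j,j} = λ(j)/λ(j-1)`,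
`U_{j,j+1} = s·r^(j-1)`), written with 0-based `Fin n` indices. -/
def Umat {F : Type*} [Field F] (r s : F) (n : ℕ) : Matrix (Fin n) (Fin n) F :=
  Matrix.of fun a b =>
    if (a : ℕ) = (b : ℕ) then
      lam (r ^ 2) (s ^ 2) ((a : ℕ) + 1) / lam (r ^ 2) (s ^ 2) (a : ℕ)
    else if (b : ℕ) = (a : ℕ) + 1 then s * r ^ (a : ℕ)
    else 0


/-- Lehmer's tridiagonal matrix `M(n)` (1-based: `M_{i,i} = 1`,
`M_{i,i+1} = s·r^(i-1)`, `M_{i+1,i} = s·r^(i-1)`), with 0-based `Fin n` indices. -/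
def lehmerM {R : Type*} [CommRing R] (r s : R) (n : ℕ) : Matrix (Fin n) (Fin n) R :=
  Matrix.of fun a b =>
    if (a : ℕ) = (b : ℕ) then 1
    else if (a : ℕ) + 1 = (b : ℕ) then s * r ^ (a : ℕ)
    else if (b : ℕ) + 1 = (a : ℕ) then s * r ^ (b : ℕ)
    else 0


open Finset

section Lam

variable {R : Type*} [CommRing R]

theorem qbinom_succ_succ (q : R) (n k : ℕ) :
    qbinom q (n + 1) (k + 1) = qbinom q n (k + 1) + q ^ (n - k) * qbinom q n k :=
  rfl

theorem qbinom_eq_zero_of_lt (q : R) {n k : ℕ} (h : n < k) : qbinom q n k = 0 := by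
  induction n generalizing k with
  | zero => obtain ⟨k, rfl⟩ := Nat.exists_eq_succ_of_ne_zero (by omega : k ≠ 0); rfl
  | succ n ih =>
    obtain ⟨k, rfl⟩ := Nat.exists_eq_succ_of_ne_zero (by omega : k ≠ 0)
    rw [qbinom_succ_succ, ih (by omega), ih (by omega), mul_zero, add_zero]

def lamTerm (q z : R) (m k : ℕ) : R :=
  qbinom q (m - k) k * (-1 : R) ^ k * q ^ (k * (k - 1)) * z ^ k

theorem lamTerm_zero_right (q z : R) (m : ℕ) : lamTerm q z m 0 = 1 := by
  simp [lamTerm, qbinom]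

theorem lamTerm_add_two_succ (q z : R) {j k : ℕ} (hk : 2 * k ≤ j) :
    lamTerm q z (j + 2) (k + 1) = lamTerm q z (j + 1) (k + 1) - z * q ^ j * lamTerm q z j k := by
  have hpow : q ^ (j - k - k) * q ^ ((k + 1) * k) = q ^ j * q ^ (k * (k - 1)) := by
    rw [← pow_add, ← pow_add]
    congr 1
    obtain ⟨m, rfl⟩ := Nat.exists_eq_add_of_le hk
    rw [show 2 * k + m - k - k = m by omega]
    rcases k with _ | k
    · simp
    · rw [Nat.add_sub_cancel]
      ring
  rw [lamTerm, lamTerm, lamTerm, show j + 2 - (k + 1) = j - k + 1 by omega,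
    show j + 1 - (k + 1) = j - k by omega, qbinom_succ_succ, Nat.add_sub_cancel]
  linear_combination ((-1 : R) ^ (k + 1) * z ^ (k + 1) * qbinom q (j - k) k) * hpow

theorem lam_eq_sum_range (q z : R) {m N : ℕ} (h : m / 2 + 1 ≤ N) :
    lam q z m = ∑ k ∈ range N, lamTerm q z m k := by
  refine sum_subset (range_subset_range.2 h) fun k hk hkm => ?_
  rw [mem_range] at hk hkm
  rw [qbinom_eq_zero_of_lt q (by omega), zero_mul, zero_mul, zero_mul]

theorem lam_zero (q z : R) : lam q z 0 = 1 := by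
  simp [lam, qbinom]

theorem lam_one (q z : R) : lam q z 1 = 1 := by
  simp [lam, qbinom]

theorem lam_add_two (q z : R) (j : ℕ) :
    lam q z (j + 2) = lam q z (j + 1) - z * q ^ j * lam q z j := by
  rw [lam_eq_sum_range q z (m := j + 2) (N := j / 2 + 2) (by omega),
    lam_eq_sum_range q z (m := j + 1) (N := j / 2 + 2) (by omega),
    lam_eq_sum_range q z (m := j) le_rfl, sum_range_succ' (lamTerm q z (j + 2)),
    sum_range_succ' (lamTerm q z (j + 1)),
    lamTerm_zero_right, lamTerm_zero_right, mul_sum,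
    sum_congr rfl fun k hk => lamTerm_add_two_succ q z (by rw [mem_range] at hk; omega),
    sum_sub_distrib]
  ring

end Lam

namespace Matrix

variable {R : Type*} [CommSemiring R] {n : ℕ} {L : Matrix (Fin n) (Fin n) R}

theorem mul_apply_of_lower_bidiagonal_of_val_eq_zero
    (hL : ∀ a c : Fin n, (a : ℕ) ≠ c → (a : ℕ) ≠ c + 1 → L a c = 0)
    (U : Matrix (Fin n) (Fin n) R) {a : Fin n} (ha : (a : ℕ) = 0) (b : Fin n) :
    (L * U) a b = L a a * U a b := by
  rw [mul_apply]
  refine (Fintype.sum_eq_single a fun c hc => ?_)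
  rw [hL a c (fun h => hc (Fin.ext h.symm)) (by omega), zero_mul]

theorem mul_apply_of_lower_bidiagonal_of_val_eq_succ
    (hL : ∀ a c : Fin n, (a : ℕ) ≠ c → (a : ℕ) ≠ c + 1 → L a c = 0)
    (U : Matrix (Fin n) (Fin n) R) {a c : Fin n} (hac : (a : ℕ) = c + 1) (b : Fin n) :
    (L * U) a b = L a c * U c b + L a a * U a b := by
  rw [mul_apply]
  refine Fintype.sum_eq_add c a (fun h => by rw [h] at hac; omega) fun d ⟨hdc, hda⟩ => ?_
  rw [hL a d (fun h => hda (Fin.ext h.symm))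
    (fun h => hdc (Fin.ext (by omega))), zero_mul]

end Matrix

section LU

variable {F : Type*} [Field F] (r s : F)

theorem Lmat_apply_eq_zero {n : ℕ} {a c : Fin n} (h₀ : (a : ℕ) ≠ c) (h₁ : (a : ℕ) ≠ c + 1) :
    Lmat r s n a c = 0 := by
  simp [Lmat, h₀, h₁]

theorem mul_div_lam_mul_add_div_lam_eq_one {i : ℕ} (h : lam (r ^ 2) (s ^ 2) (i + 1) ≠ 0) :
    s * r ^ i * lam (r ^ 2) (s ^ 2) i / lam (r ^ 2) (s ^ 2) (i + 1) * (s * r ^ i) +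
      lam (r ^ 2) (s ^ 2) (i + 2) / lam (r ^ 2) (s ^ 2) (i + 1) = 1 := by
  rw [lam_add_two]
  field_simp
  ring

end LU

/-- With `q = r²`, `z = s²`, and `λ(j) ≠ 0` for `0 ≤ j ≤ n`, the matrices `L`
and `U` give the LU-decomposition of Lehmer's matrix: `L·U = M`, with `L` unit
lower bidiagonal and `U` upper bidiagonal. -/
theorem LU_decomposition {F : Type*} [Field F] (r s : F) (n : ℕ)
    (hlam : ∀ j : ℕ, j ≤ n → lam (r ^ 2) (s ^ 2) j ≠ 0) :
    Lmat r s n * Umat r s n = lehmerM r s n := by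
  ext a b
  rcases ha : (a : ℕ) with _ | i
  · rw [Matrix.mul_apply_of_lower_bidiagonal_of_val_eq_zero (fun _ _ => Lmat_apply_eq_zero r s) _ ha]
    simp only [Lmat, Umat, lehmerM, Matrix.of_apply, ha, zero_add, lam_zero, lam_one]
    split_ifs <;> first | omega | contradiction | simp
  · have hi : i + 1 < n := ha ▸ a.isLt
    have hlam_i := hlam i (by omega)
    have hlam_succ := hlam (i + 1) hi.le
    rw [Matrix.mul_apply_of_lower_bidiagonal_of_val_eq_succ (fun _ _ => Lmat_apply_eq_zero r s) _
      (c := ⟨i, by omega⟩) ha]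
    rcases (by omega : (b : ℕ) = i ∨ (b : ℕ) = i + 1 ∨ (b : ℕ) = i + 2 ∨
        (b : ℕ) < i ∨ i + 2 < (b : ℕ)) with hb | hb | hb | hb
    · simp only [Lmat, Umat, lehmerM, Matrix.of_apply, ha, hb]
      split_ifs <;> first | omega | (field_simp; ring)
    · simp only [Lmat, Umat, lehmerM, Matrix.of_apply, ha, hb]
      split_ifs <;> first | omega | simpa using mul_div_lam_mul_add_div_lam_eq_one r s hlam_succ
    · simp only [Lmat, Umat, lehmerM, Matrix.of_apply, ha, hb]
      split_ifs <;> first | omega | ring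
    · simp only [Lmat, Umat, lehmerM, Matrix.of_apply, ha]
      split_ifs <;> first | omega | ring
end
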